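/- Let θ : ℝ → ℝ be differentiable and positive on an interval containing 0, with θ'(t) ≤ -θ(t)²/3 and θ(0) = θ_i > 0. Then θ cannot be extended as a positive differentiable solution of this inequality to any t ≤ -3/θ_i; that is, if θ is defined, positive, and satisfies the inequality on [T, 0], then T > -3/θ_i. -/

import Mathlib

/-!
The inequality `θ' ≤ -θ²/3` says exactly that `(1/θ)' ≥ 1/3`, so going back from `0` to `T`
the reciprocal `1/θ` drops by at least `-T/3`. As it must stay positive at `T`, this forces
`-T/3 < 1/θ(0) = 1/θ_i`.
-/

open Set

theorem monotoneOn_inv_sub_mul_of_deriv_le_neg_mul_sq {θ : ℝ → ℝ} {D : Set ℝ} {k : ℝ}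
    (hD : Convex ℝ D) (hcont : ContinuousOn θ D) (hdiff : DifferentiableOn ℝ θ (interior D))
    (hne : ∀ t ∈ D, θ t ≠ 0) (hineq : ∀ t ∈ interior D, deriv θ t ≤ -k * θ t ^ 2) :
    MonotoneOn (fun t => (θ t)⁻¹ - k * t) D := by
  have hderiv : ∀ t ∈ interior D,
      HasDerivAt (fun t => (θ t)⁻¹ - k * t) (-deriv θ t / θ t ^ 2 - k) t := fun t ht => by
    have hθ := (hdiff.differentiableAt (isOpen_interior.mem_nhds ht)).hasDerivAt
    exact (hθ.inv (hne t (interior_subset ht))).sub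
      ((hasDerivAt_id t).const_mul k |>.congr_deriv (mul_one k))
  refine monotoneOn_of_deriv_nonneg hD ?_ ?_ ?_
  · exact (hcont.inv₀ hne).sub (continuousOn_const.mul continuousOn_id)
  · exact fun t ht => (hderiv t ht).differentiableAt.differentiableWithinAt
  · intro t ht
    have hsq : 0 < θ t ^ 2 := sq_pos_iff.2 (hne t (interior_subset ht))
    have hk : k ≤ -deriv θ t / θ t ^ 2 := by
      rw [le_div_iff₀ hsq]
      linarith [hineq t ht]
    rw [(hderiv t ht).deriv]
    linarith

theorem mul_sub_lt_inv_of_deriv_le_neg_mul_sq {θ : ℝ → ℝ} {a b k : ℝ} (hab : a ≤ b)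
    (hdiff : DifferentiableOn ℝ θ (Icc a b)) (hpos : ∀ t ∈ Icc a b, 0 < θ t)
    (hineq : ∀ t ∈ Ioo a b, deriv θ t ≤ -k * θ t ^ 2) :
    k * (b - a) < (θ b)⁻¹ := by
  have hmono := monotoneOn_inv_sub_mul_of_deriv_le_neg_mul_sq (convex_Icc a b)
    hdiff.continuousOn (hdiff.mono interior_subset) (fun t ht => (hpos t ht).ne')
    (by simpa only [interior_Icc] using hineq)
  have hle := hmono (left_mem_Icc.2 hab) (right_mem_Icc.2 hab) hab
  have hθa := inv_pos.2 (hpos a (left_mem_Icc.2 hab))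
  simp only at hle
  linarith

theorem stmt_3_general (θ : ℝ → ℝ) (θi T : ℝ) (hT : T ≤ 0)
    (hdiff : Differentiable ℝ θ)
    (hpos : ∀ t ∈ Set.Icc T (0 : ℝ), 0 < θ t)
    (hineq : ∀ t ∈ Set.Icc T (0 : ℝ), deriv θ t ≤ -(θ t) ^ 2 / 3)
    (h0 : θ 0 = θi) :
    T > -3 / θi := by
  have hlife : 3⁻¹ * (0 - T) < (θ 0)⁻¹ :=
    mul_sub_lt_inv_of_deriv_le_neg_mul_sq hT hdiff.differentiableOn hpos
      (fun t ht => by linarith [hineq t (Ioo_subset_Icc_self ht)])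
  rw [h0] at hlife
  rw [gt_iff_lt, div_eq_mul_inv]
  linarith

theorem stmt_3 (θ : ℝ → ℝ) (θi T : ℝ) (hT : T ≤ 0)
    (hdiff : Differentiable ℝ θ)
    (hpos : ∀ t ∈ Set.Icc T (0 : ℝ), 0 < θ t)
    (hineq : ∀ t ∈ Set.Icc T (0 : ℝ), deriv θ t ≤ -(θ t) ^ 2 / 3)
    (h0 : θ 0 = θi) (hθi : 0 < θi) :
    T > -3 / θi :=
  stmt_3_general θ θi T hT hdiff hpos hineq h0
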